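/- arXiv:cs/0610144 — 4 statements merged into one kernel-verified Lean document; each statement's English description precedes it below -/
import Mathlib

section
/- The entropy of the tilted distribution is nondecreasing in the tilting parameter: for all ρ_1, ρ_2 with −1 < ρ_1 ≤ ρ_2, one has H(p^{ρ_1}) ≤ H(p^{ρ_2}). -/
open scoped BigOperators

noncomputable section

/-- `q` is a probability mass function on `Z`. -/
def IsPMF {Z : Type*} [Fintype Z] (q : Z → ℝ) : Prop :=
  (∀ z, 0 ≤ q z) ∧ ∑ z, q z = 1

/-- Shannon entropy in nats. -/
def entropy {Z : Type*} [Fintype Z] (q : Z → ℝ) : ℝ :=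
  - ∑ z, q z * Real.log (q z)

/-- The tilted distribution `p^ρ(z) = p(z)^{1/(1+ρ)} / Σ_s p(s)^{1/(1+ρ)}`. -/
def tilted {Z : Type*} [Fintype Z] (p : Z → ℝ) (ρ : ℝ) : Z → ℝ :=
  fun z => p z ^ (1 / (1 + ρ)) / ∑ s, p s ^ (1 / (1 + ρ))

/-- Gibbs' inequality. -/
lemma gibbs_aux {Z : Type*} [Fintype Z] (q r : Z → ℝ)
    (hq : ∀ z, 0 < q z) (hr : ∀ z, 0 < r z)
    (hqs : ∑ z, q z = 1) (hrs : ∑ z, r z = 1) :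
    ∑ z, q z * Real.log (r z) ≤ ∑ z, q z * Real.log (q z) := by
  have key : ∑ z, q z * (Real.log (r z) - Real.log (q z)) ≤ 0 := by
    have h1 : ∀ z : Z, q z * (Real.log (r z) - Real.log (q z)) ≤ r z - q z := by
      intro z
      have hdiv : 0 < r z / q z := div_pos (hr z) (hq z)
      have := Real.log_le_sub_one_of_pos hdiv
      rw [Real.log_div (hr z).ne' (hq z).ne'] at this
      calc q z * (Real.log (r z) - Real.log (q z)) ≤ q z * (r z / q z - 1) := by
            exact mul_le_mul_of_nonneg_left this (hq z).le
        _ = r z - q z := by rw [mul_sub, mul_one, mul_div_cancel₀ _ (hq z).ne']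
    calc ∑ z, q z * (Real.log (r z) - Real.log (q z)) ≤ ∑ z, (r z - q z) :=
          Finset.sum_le_sum fun z _ => h1 z
      _ = 0 := by rw [Finset.sum_sub_distrib, hqs, hrs]; ring
  have : ∑ z, q z * (Real.log (r z) - Real.log (q z))
      = ∑ z, q z * Real.log (r z) - ∑ z, q z * Real.log (q z) := by
    rw [← Finset.sum_sub_distrib]; congr 1; funext z; ring
  linarith [this ▸ key]

/-- Lemma 16: the entropy of the tilted distribution is nondecreasing in `ρ`. -/
theorem statement16 {Z : Type*} [Fintype Z] [Nonempty Z]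
    (p : Z → ℝ) (hp : IsPMF p) (hpos : ∀ z, 0 < p z)
    (ρ₁ ρ₂ : ℝ) (h1 : -1 < ρ₁) (h12 : ρ₁ ≤ ρ₂) :
    entropy (tilted p ρ₁) ≤ entropy (tilted p ρ₂) := by
  have h1' : 0 < 1 + ρ₁ := by linarith
  have h2' : 0 < 1 + ρ₂ := by linarith
  set β₁ := 1 / (1 + ρ₁) with hβ₁def
  set β₂ := 1 / (1 + ρ₂) with hβ₂def
  have hβ1 : 0 < β₁ := by positivity
  have hβ2 : 0 < β₂ := by positivity
  have hββ : β₂ ≤ β₁ := one_div_le_one_div_of_le h1' (by linarith)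
  -- general setup
  set S : ℝ → ℝ := fun β => ∑ s, p s ^ β with hSdef
  set q : ℝ → Z → ℝ := fun β z => p z ^ β / S β with hqdef
  have hS : ∀ β, 0 < S β := fun β =>
    Finset.sum_pos (fun s _ => Real.rpow_pos_of_pos (hpos s) β) Finset.univ_nonempty
  have hqpos : ∀ β z, 0 < q β z := fun β z =>
    div_pos (Real.rpow_pos_of_pos (hpos z) β) (hS β)
  have hqsum : ∀ β, ∑ z, q β z = 1 := by
    intro β
    simp only [hqdef]
    rw [← Finset.sum_div, div_self (hS β).ne']
  have hlog : ∀ β z, Real.log (q β z) = β * Real.log (p z) - Real.log (S β) := by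
    intro β z
    simp only [hqdef]
    rw [Real.log_div (Real.rpow_pos_of_pos (hpos z) β).ne' (hS β).ne',
      Real.log_rpow (hpos z)]
  set E : ℝ → ℝ := fun β => ∑ z, q β z * Real.log (p z) with hEdef
  have hA : ∀ β γ, ∑ z, q γ z * Real.log (q β z) = β * E γ - Real.log (S β) := by
    intro β γ
    have : ∀ z : Z, q γ z * Real.log (q β z)
        = β * (q γ z * Real.log (p z)) - Real.log (S β) * q γ z := by
      intro z; rw [hlog]; ring
    rw [Finset.sum_congr rfl fun z _ => this z, Finset.sum_sub_distrib,
      ← Finset.mul_sum, ← Finset.mul_sum, hqsum, mul_one, hEdef]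
  have ht1 : tilted p ρ₁ = q β₁ := rfl
  have ht2 : tilted p ρ₂ = q β₂ := rfl
  -- Gibbs in both directions
  have gA := gibbs_aux (q β₁) (q β₂) (hqpos β₁) (hqpos β₂) (hqsum β₁) (hqsum β₂)
  have gB := gibbs_aux (q β₂) (q β₁) (hqpos β₂) (hqpos β₁) (hqsum β₂) (hqsum β₁)
  rw [hA β₂ β₁, hA β₁ β₁] at gA
  rw [hA β₁ β₂, hA β₂ β₂] at gB
  -- monotonicity of E
  have hE : E β₂ ≤ E β₁ := by
    rcases eq_or_lt_of_le hββ with heq | hlt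
    · rw [heq]
    · nlinarith [gA, gB]
  -- conclude
  rw [ht1, ht2, entropy, entropy]
  have : β₂ * E β₂ - Real.log (S β₂) ≤ β₁ * E β₁ - Real.log (S β₁) := by
    nlinarith [mul_le_mul_of_nonneg_left hE hβ2.le]
  rw [hA β₁ β₁, hA β₂ β₂]
  linarith
end
end

section
/- The conditional entropy of the x−y tilted distribution is nondecreasing in the tilting parameter: for all ρ_1, ρ_2 with −1 < ρ_1 ≤ ρ_2, one has H_{p̄^{ρ_1}}(x|y) ≤ H_{p̄^{ρ_2}}(x|y). -/
open scoped BigOperators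

noncomputable section

/-- Marginal on the second coordinate. -/
def margY {X Y : Type*} [Fintype X] (q : X × Y → ℝ) : Y → ℝ := fun y => ∑ x, q (x, y)

/-- Marginal on the first coordinate. -/
def margX {X Y : Type*} [Fintype Y] (q : X × Y → ℝ) : X → ℝ := fun x => ∑ y, q (x, y)

/-- Conditional entropy `H_q(x|y) = H(q) − H(q_Y)`. -/
def condEntXY {X Y : Type*} [Fintype X] [Fintype Y] (q : X × Y → ℝ) : ℝ :=
  entropy q - entropy (margY q)

/-- Conditional entropy `H_q(y|x) = H(q) − H(q_X)`. -/
def condEntYX {X Y : Type*} [Fintype X] [Fintype Y] (q : X × Y → ℝ) : ℝ :=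
  entropy q - entropy (margX q)

/-- `D(y,ρ) = Σ_x p(x,y)^{1/(1+ρ)}`. -/
def Dt {X Y : Type*} [Fintype X] (p : X × Y → ℝ) (ρ : ℝ) (y : Y) : ℝ :=
  ∑ x, p (x, y) ^ (1 / (1 + ρ))

/-- `B(ρ) = Σ_y D(y,ρ)^{1+ρ}`. -/
def Bt {X Y : Type*} [Fintype X] [Fintype Y] (p : X × Y → ℝ) (ρ : ℝ) : ℝ :=
  ∑ y, Dt p ρ y ^ (1 + ρ)

/-- The `x−y` tilted distribution
`p̄^ρ(x,y) = (D(y,ρ)^{1+ρ}/B(ρ)) · (p(x,y)^{1/(1+ρ)}/D(y,ρ))`. -/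
def xyTilted {X Y : Type*} [Fintype X] [Fintype Y] (p : X × Y → ℝ) (ρ : ℝ) :
    X × Y → ℝ :=
  fun z => (Dt p ρ z.2 ^ (1 + ρ) / Bt p ρ) * (p z ^ (1 / (1 + ρ)) / Dt p ρ z.2)

/-!
`log B` is a convex function of `ρ` on `(-1, ∞)`: Hölder's inequality, applied once over `x` and
once over `y`, gives `B(aρ₁ + bρ₂) ≤ B(ρ₁)^a B(ρ₂)^b`. Differentiating `B` shows that
`d/dρ log B(ρ) = Σ_y p̄^ρ(y) H(p̄^ρ(·|y)) = H_{p̄^ρ}(x|y)`, and the derivative of a differentiable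
convex function is monotone.
-/

open Finset Real

lemma Real.sum_rpow_mul_rpow_le {ι : Type*} (s : Finset ι) {f g : ι → ℝ}
    (hf : ∀ i ∈ s, 0 ≤ f i) (hg : ∀ i ∈ s, 0 ≤ g i) {a b : ℝ} (ha : 0 < a) (hb : 0 < b)
    (hab : a + b = 1) :
    ∑ i ∈ s, f i ^ a * g i ^ b ≤ (∑ i ∈ s, f i) ^ a * (∑ i ∈ s, g i) ^ b := by
  have hconj : (1 / a).HolderConjugate (1 / b) :=
    Real.holderConjugate_iff.mpr ⟨by rw [lt_div_iff₀ ha]; linarith, by simpa using hab⟩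
  have hpow {c : ℝ} (hc : 0 < c) {u : ℝ} (hu : 0 ≤ u) : (u ^ c) ^ (1 / c) = u := by
    rw [← rpow_mul hu, mul_one_div_cancel hc.ne', rpow_one]
  have := inner_le_Lp_mul_Lq_of_nonneg s hconj (fun i hi => rpow_nonneg (hf i hi) a)
    (fun i hi => rpow_nonneg (hg i hi) b)
  rwa [sum_congr rfl fun i hi => hpow ha (hf i hi), sum_congr rfl fun i hi => hpow hb (hg i hi),
    one_div_one_div, one_div_one_div] at this

lemma Real.sum_rpow_inv_rpow_le {ι : Type*} (s : Finset ι) {u : ι → ℝ} (hu : ∀ i ∈ s, 0 ≤ u i)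
    {t₁ t₂ a b : ℝ} (ht₁ : 0 < t₁) (ht₂ : 0 < t₂) (ha : 0 < a) (hb : 0 < b) (hab : a + b = 1) :
    (∑ i ∈ s, u i ^ (1 / (a * t₁ + b * t₂))) ^ (a * t₁ + b * t₂) ≤
      ((∑ i ∈ s, u i ^ (1 / t₁)) ^ t₁) ^ a * ((∑ i ∈ s, u i ^ (1 / t₂)) ^ t₂) ^ b := by
  set t := a * t₁ + b * t₂
  have ht : 0 < t := by positivity
  have hS₁ : 0 ≤ ∑ i ∈ s, u i ^ (1 / t₁) := sum_nonneg fun i hi => rpow_nonneg (hu i hi) _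
  have hS₂ : 0 ≤ ∑ i ∈ s, u i ^ (1 / t₂) := sum_nonneg fun i hi => rpow_nonneg (hu i hi) _
  -- Hölder with the exponents `a t₁ / t` and `b t₂ / t`, which sum to `1`.
  have hHolder := Real.sum_rpow_mul_rpow_le s (fun i hi => rpow_nonneg (hu i hi) (1 / t₁))
    (fun i hi => rpow_nonneg (hu i hi) (1 / t₂)) (div_pos (mul_pos ha ht₁) ht)
    (div_pos (mul_pos hb ht₂) ht) (by rw [← add_div, div_self ht.ne'])
  have hterm : ∀ i ∈ s, (u i ^ (1 / t₁)) ^ (a * t₁ / t) * (u i ^ (1 / t₂)) ^ (b * t₂ / t) =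
      u i ^ (1 / t) := by
    intro i hi
    have hexp : 1 / t₁ * (a * t₁ / t) + 1 / t₂ * (b * t₂ / t) = 1 / t := by
      field_simp; exact hab
    rw [← rpow_mul (hu i hi), ← rpow_mul (hu i hi),
      ← rpow_add' (hu i hi) (by rw [hexp]; positivity), hexp]
  rw [sum_congr rfl hterm] at hHolder
  calc (∑ i ∈ s, u i ^ (1 / t)) ^ t
      ≤ ((∑ i ∈ s, u i ^ (1 / t₁)) ^ (a * t₁ / t) *
          (∑ i ∈ s, u i ^ (1 / t₂)) ^ (b * t₂ / t)) ^ t :=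
        rpow_le_rpow (sum_nonneg fun i hi => rpow_nonneg (hu i hi) _) hHolder ht.le
    _ = _ := by
        rw [mul_rpow (rpow_nonneg hS₁ _) (rpow_nonneg hS₂ _), ← rpow_mul hS₁, ← rpow_mul hS₂,
          ← rpow_mul hS₁, ← rpow_mul hS₂]
        congr 2 <;> field_simp

lemma condEntXY_eq_sum_margY_mul_entropy {X Y : Type*} [Fintype X] [Fintype Y] [Nonempty X]
    (q : X × Y → ℝ) (hq : ∀ z, 0 < q z) :
    condEntXY q = ∑ y, margY q y * entropy (fun x => q (x, y) / margY q y) := by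
  have hm : ∀ y, 0 < margY q y := fun y => sum_pos (fun x _ => hq (x, y)) univ_nonempty
  have hsplit : ∀ x y, q (x, y) * log (q (x, y)) =
      margY q y * (q (x, y) / margY q y * log (q (x, y) / margY q y)) +
        q (x, y) * log (margY q y) := by
    intro x y
    rw [log_div (hq _).ne' (hm y).ne', ← mul_assoc, mul_div_cancel₀ _ (hm y).ne']
    ring
  simp only [condEntXY, entropy, Fintype.sum_prod_type_right, hsplit, sum_add_distrib,
    ← mul_sum, ← sum_mul, margY, mul_neg, sum_neg_distrib]
  ring

section Tilted

variable {X Y : Type*} [Fintype X] {p : X × Y → ℝ}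

lemma Dt_pos [Nonempty X] (hpos : ∀ z, 0 < p z) (ρ : ℝ) (y : Y) : 0 < Dt p ρ y :=
  sum_pos (fun _ _ => rpow_pos_of_pos (hpos _) _) univ_nonempty

lemma entropy_rpow_div_Dt [Nonempty X] (hpos : ∀ z, 0 < p z) (ρ : ℝ) (y : Y) :
    (entropy fun x => p (x, y) ^ (1 / (1 + ρ)) / Dt p ρ y) =
      log (Dt p ρ y) - (∑ x, p (x, y) ^ (1 / (1 + ρ)) * log (p (x, y))) / Dt p ρ y / (1 + ρ) := by
  have hD := Dt_pos hpos ρ y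
  have hlog : ∀ x, log (p (x, y) ^ (1 / (1 + ρ)) / Dt p ρ y) =
      log (p (x, y)) / (1 + ρ) - log (Dt p ρ y) := fun x => by
    rw [log_div (rpow_pos_of_pos (hpos _) _).ne' hD.ne', log_rpow (hpos _)]
    ring
  have hterm : ∀ x,
      p (x, y) ^ (1 / (1 + ρ)) / Dt p ρ y * (log (p (x, y)) / (1 + ρ) - log (Dt p ρ y)) =
        p (x, y) ^ (1 / (1 + ρ)) * log (p (x, y)) / Dt p ρ y / (1 + ρ) -
        p (x, y) ^ (1 / (1 + ρ)) / Dt p ρ y * log (Dt p ρ y) := fun x => by ring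
  simp only [entropy, hlog, hterm, sum_sub_distrib, ← sum_div, ← sum_mul]
  rw [← Dt, div_self hD.ne', one_mul]
  ring

lemma hasDerivAt_Dt (hpos : ∀ z, 0 < p z) {ρ : ℝ} (hρ : 1 + ρ ≠ 0) (y : Y) :
    HasDerivAt (fun r => Dt p r y)
      (-(∑ x, p (x, y) ^ (1 / (1 + ρ)) * log (p (x, y))) / (1 + ρ) ^ 2) ρ := by
  have hexp : HasDerivAt (fun r : ℝ => 1 / (1 + r)) (-1 / (1 + ρ) ^ 2) ρ := by
    simpa [one_div] using ((hasDerivAt_id ρ).const_add 1).fun_inv hρ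
  refine (HasDerivAt.fun_sum fun x (_ : x ∈ univ) => hexp.const_rpow (hpos (x, y))).congr_deriv ?_
  rw [← sum_neg_distrib, sum_div]
  exact sum_congr rfl fun x _ => by ring

lemma hasDerivAt_Dt_rpow [Nonempty X] (hpos : ∀ z, 0 < p z) {ρ : ℝ} (hρ : 1 + ρ ≠ 0) (y : Y) :
    HasDerivAt (fun r => Dt p r y ^ (1 + r))
      (Dt p ρ y ^ (1 + ρ) * entropy fun x => p (x, y) ^ (1 / (1 + ρ)) / Dt p ρ y) ρ := by
  have hD := Dt_pos hpos ρ y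
  refine ((hasDerivAt_Dt hpos hρ y).rpow ((hasDerivAt_id ρ).const_add 1) hD).congr_deriv ?_
  rw [entropy_rpow_div_Dt hpos, rpow_sub_one hD.ne', id]
  field_simp
  ring

variable [Fintype Y]

lemma Bt_pos [Nonempty X] [Nonempty Y] (hpos : ∀ z, 0 < p z) (ρ : ℝ) : 0 < Bt p ρ :=
  sum_pos (fun y _ => rpow_pos_of_pos (Dt_pos hpos ρ y) _) univ_nonempty

lemma Bt_le_rpow_mul_rpow [Nonempty X] (hpos : ∀ z, 0 < p z) {ρ₁ ρ₂ a b : ℝ} (h₁ : -1 < ρ₁)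
    (h₂ : -1 < ρ₂) (ha : 0 < a) (hb : 0 < b) (hab : a + b = 1) :
    Bt p (a * ρ₁ + b * ρ₂) ≤ Bt p ρ₁ ^ a * Bt p ρ₂ ^ b := by
  have hρ : 1 + (a * ρ₁ + b * ρ₂) = a * (1 + ρ₁) + b * (1 + ρ₂) := by
    linear_combination -hab
  calc Bt p (a * ρ₁ + b * ρ₂)
      ≤ ∑ y, (Dt p ρ₁ y ^ (1 + ρ₁)) ^ a * (Dt p ρ₂ y ^ (1 + ρ₂)) ^ b := by
        refine sum_le_sum fun y _ => ?_
        rw [Dt, hρ]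
        exact Real.sum_rpow_inv_rpow_le _ (fun x _ => (hpos _).le) (by linarith) (by linarith)
          ha hb hab
    _ ≤ Bt p ρ₁ ^ a * Bt p ρ₂ ^ b :=
        Real.sum_rpow_mul_rpow_le _ (fun y _ => rpow_nonneg (Dt_pos hpos ρ₁ y).le _)
          (fun y _ => rpow_nonneg (Dt_pos hpos ρ₂ y).le _) ha hb hab

lemma convexOn_log_Bt [Nonempty X] [Nonempty Y] (hpos : ∀ z, 0 < p z) :
    ConvexOn ℝ (Set.Ioi (-1)) fun ρ => log (Bt p ρ) := by
  refine ⟨convex_Ioi _, fun ρ₁ h₁ ρ₂ h₂ a b ha hb hab => ?_⟩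
  rcases ha.eq_or_lt with rfl | ha
  · simp_all
  rcases hb.eq_or_lt with rfl | hb
  · simp_all
  calc log (Bt p (a * ρ₁ + b * ρ₂))
      ≤ log (Bt p ρ₁ ^ a * Bt p ρ₂ ^ b) :=
        log_le_log (Bt_pos hpos _) (Bt_le_rpow_mul_rpow hpos h₁ h₂ ha hb hab)
    _ = a * log (Bt p ρ₁) + b * log (Bt p ρ₂) := by
        rw [log_mul (rpow_pos_of_pos (Bt_pos hpos ρ₁) _).ne'
          (rpow_pos_of_pos (Bt_pos hpos ρ₂) _).ne', log_rpow (Bt_pos hpos ρ₁),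
          log_rpow (Bt_pos hpos ρ₂)]

lemma margY_xyTilted [Nonempty X] (hpos : ∀ z, 0 < p z) (ρ : ℝ) (y : Y) :
    margY (xyTilted p ρ) y = Dt p ρ y ^ (1 + ρ) / Bt p ρ := by
  simp only [margY, xyTilted, ← mul_sum, ← sum_div]
  rw [← Dt, div_self (Dt_pos hpos ρ y).ne', mul_one]

lemma xyTilted_pos [Nonempty X] [Nonempty Y] (hpos : ∀ z, 0 < p z) (ρ : ℝ) (z : X × Y) :
    0 < xyTilted p ρ z := by
  have := Dt_pos hpos ρ z.2
  have := Bt_pos hpos ρ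
  have := rpow_pos_of_pos (hpos z) (1 / (1 + ρ))
  unfold xyTilted
  positivity

lemma condEntXY_xyTilted [Nonempty X] [Nonempty Y] (hpos : ∀ z, 0 < p z) (ρ : ℝ) :
    condEntXY (xyTilted p ρ) =
      ∑ y, Dt p ρ y ^ (1 + ρ) / Bt p ρ * entropy fun x => p (x, y) ^ (1 / (1 + ρ)) / Dt p ρ y := by
  rw [condEntXY_eq_sum_margY_mul_entropy _ (xyTilted_pos hpos ρ)]
  refine sum_congr rfl fun y _ => ?_
  have hw : 0 < Dt p ρ y ^ (1 + ρ) / Bt p ρ :=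
    div_pos (rpow_pos_of_pos (Dt_pos hpos ρ y) _) (Bt_pos hpos ρ)
  simp only [margY_xyTilted hpos, xyTilted, mul_div_cancel_left₀ _ hw.ne']

lemma hasDerivAt_log_Bt [Nonempty X] [Nonempty Y] (hpos : ∀ z, 0 < p z) {ρ : ℝ}
    (hρ : 1 + ρ ≠ 0) :
    HasDerivAt (fun r => log (Bt p r)) (condEntXY (xyTilted p ρ)) ρ := by
  refine ((HasDerivAt.fun_sum fun y (_ : y ∈ univ) => hasDerivAt_Dt_rpow hpos hρ y).log
    (Bt_pos hpos ρ).ne').congr_deriv ?_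
  rw [condEntXY_xyTilted hpos, sum_div]
  exact sum_congr rfl fun y _ => mul_div_right_comm _ _ _

end Tilted

theorem statement17_general {X Y : Type*} [Fintype X] [Fintype Y] [Nonempty X] [Nonempty Y]
    (p : X × Y → ℝ) (hpos : ∀ z, 0 < p z)
    (ρ₁ ρ₂ : ℝ) (h1 : -1 < ρ₁) (h12 : ρ₁ ≤ ρ₂) :
    condEntXY (xyTilted p ρ₁) ≤ condEntXY (xyTilted p ρ₂) := by
  have hderiv : ∀ ρ ∈ Set.Ioi (-1 : ℝ),
      HasDerivAt (fun r => log (Bt p r)) (condEntXY (xyTilted p ρ)) ρ :=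
    fun ρ hρ => hasDerivAt_log_Bt hpos (by linarith [Set.mem_Ioi.mp hρ])
  have h2 : ρ₂ ∈ Set.Ioi (-1 : ℝ) := lt_of_lt_of_le h1 h12
  have hmono :=
    (convexOn_log_Bt hpos).monotoneOn_deriv fun ρ hρ => (hderiv ρ hρ).differentiableAt
  simpa only [(hderiv ρ₁ h1).deriv, (hderiv ρ₂ h2).deriv] using hmono h1 h2 h12

/-- Lemma 17: the conditional entropy of the `x−y` tilted distribution is nondecreasing
in `ρ`. -/
theorem statement17 {X Y : Type*} [Fintype X] [Fintype Y] [Nonempty X] [Nonempty Y]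
    (p : X × Y → ℝ) (hp : IsPMF p) (hpos : ∀ z, 0 < p z)
    (ρ₁ ρ₂ : ℝ) (h1 : -1 < ρ₁) (h12 : ρ₁ ≤ ρ₂) :
    condEntXY (xyTilted p ρ₁) ≤ condEntXY (xyTilted p ρ₂) :=
  statement17_general p hpos ρ₁ ρ₂ h1 h12
end
end

section
/- For every ρ > −1 and every real number c: if the function σ ↦ H(p^σ) has derivative c at the point ρ, then the function σ ↦ D(p^σ‖p) has derivative ρ·c at the point ρ. -/
open scoped BigOperators

noncomputable section

/-- Kullback–Leibler divergence in nats. -/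
def klDiv {Z : Type*} [Fintype Z] (q p : Z → ℝ) : ℝ :=
  ∑ z, q z * Real.log (q z / p z)

/-!
Write `S(σ) = Σ_s p(s)^{1/(1+σ)}` for the normalising constant of `p^σ`. Since
`log p = (1+σ) (log p^σ + log S(σ))`, one has `D(p^σ‖p) = σ H(p^σ) - (1+σ) log S(σ)`.
Differentiating `S` gives `(1+σ) (log S)'(σ) = H(p^σ) - log S(σ)`, and with this the
product rule applied to `σ H(p^σ) - (1+σ) log S(σ)` leaves exactly `σ H'(σ)`.
-/

open Real

def tiltNorm {Z : Type*} [Fintype Z] (p : Z → ℝ) (σ : ℝ) : ℝ :=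
  ∑ s, p s ^ (1 / (1 + σ))

section Tilted

variable {Z : Type*} [Fintype Z] {p : Z → ℝ}

theorem tilted_apply (σ : ℝ) (z : Z) :
    tilted p σ z = p z ^ (1 / (1 + σ)) / tiltNorm p σ :=
  rfl

theorem hasDerivAt_tiltNorm (hpos : ∀ z, 0 < p z) {ρ : ℝ} (hρ : 1 + ρ ≠ 0) :
    HasDerivAt (tiltNorm p)
      (-(1 / (1 + ρ) ^ 2) * ∑ z, p z ^ (1 / (1 + ρ)) * log (p z)) ρ := by
  have hexponent : HasDerivAt (fun σ : ℝ => 1 / (1 + σ)) (-(1 / (1 + ρ) ^ 2)) ρ := by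
    simpa [one_div, neg_div] using ((hasDerivAt_id ρ).const_add 1).fun_inv hρ
  rw [Finset.mul_sum]
  refine HasDerivAt.fun_sum fun z _ => ?_
  exact (hexponent.const_rpow (hpos z)).congr_deriv (by ring)

variable [Nonempty Z]

theorem tiltNorm_pos (hpos : ∀ z, 0 < p z) (σ : ℝ) : 0 < tiltNorm p σ :=
  Finset.sum_pos (fun s _ => rpow_pos_of_pos (hpos s) _) Finset.univ_nonempty

theorem sum_tilted (hpos : ∀ z, 0 < p z) (σ : ℝ) : ∑ z, tilted p σ z = 1 := by
  simp only [tilted, ← Finset.sum_div]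
  exact div_self (tiltNorm_pos hpos σ).ne'

theorem log_tilted (hpos : ∀ z, 0 < p z) (σ : ℝ) (z : Z) :
    log (tilted p σ z) = 1 / (1 + σ) * log (p z) - log (tiltNorm p σ) := by
  rw [tilted_apply, log_div (rpow_pos_of_pos (hpos z) _).ne' (tiltNorm_pos hpos σ).ne',
    log_rpow (hpos z)]

theorem klDiv_tilted (hpos : ∀ z, 0 < p z) {σ : ℝ} (hσ : 1 + σ ≠ 0) :
    klDiv (tilted p σ) p = σ * entropy (tilted p σ) - (1 + σ) * log (tiltNorm p σ) := by
  have hlog_p : ∀ z, log (p z) = (1 + σ) * (log (tilted p σ z) + log (tiltNorm p σ)) := by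
    intro z
    rw [log_tilted hpos]
    field_simp
    ring
  have hq_pos : ∀ z, 0 < tilted p σ z := fun z =>
    div_pos (rpow_pos_of_pos (hpos z) _) (tiltNorm_pos hpos σ)
  calc klDiv (tilted p σ) p
      = ∑ z, (-σ * (tilted p σ z * log (tilted p σ z))
          - tilted p σ z * ((1 + σ) * log (tiltNorm p σ))) := by
        refine Finset.sum_congr rfl fun z _ => ?_
        rw [log_div (hq_pos z).ne' (hpos z).ne', hlog_p z]
        ring
    _ = σ * entropy (tilted p σ) - (1 + σ) * log (tiltNorm p σ) := by
        rw [Finset.sum_sub_distrib, ← Finset.mul_sum, ← Finset.sum_mul, sum_tilted hpos,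
          entropy]
        ring

theorem entropy_tilted (hpos : ∀ z, 0 < p z) (σ : ℝ) :
    entropy (tilted p σ) =
      log (tiltNorm p σ) - 1 / (1 + σ) * ∑ z, tilted p σ z * log (p z) := by
  have hsummand : ∀ z, tilted p σ z * log (tilted p σ z)
      = 1 / (1 + σ) * (tilted p σ z * log (p z)) - tilted p σ z * log (tiltNorm p σ) := by
    intro z
    rw [log_tilted hpos]
    ring
  simp only [entropy, hsummand, Finset.sum_sub_distrib, ← Finset.mul_sum, ← Finset.sum_mul,
    sum_tilted hpos]
  ring

theorem hasDerivAt_log_tiltNorm (hpos : ∀ z, 0 < p z) {ρ : ℝ} (hρ : 1 + ρ ≠ 0) :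
    HasDerivAt (fun σ => log (tiltNorm p σ))
      ((entropy (tilted p ρ) - log (tiltNorm p ρ)) / (1 + ρ)) ρ := by
  have hmean : ∑ z, tilted p ρ z * log (p z)
      = (∑ z, p z ^ (1 / (1 + ρ)) * log (p z)) / tiltNorm p ρ := by
    rw [Finset.sum_div]
    refine Finset.sum_congr rfl fun z _ => ?_
    simp only [tilted, tiltNorm]
    ring
  convert (hasDerivAt_tiltNorm hpos hρ).log (tiltNorm_pos hpos ρ).ne' using 1
  rw [entropy_tilted hpos, hmean]
  field_simp
  ring

end Tilted

theorem statement18_general {Z : Type*} [Fintype Z] [Nonempty Z]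
    (p : Z → ℝ) (hpos : ∀ z, 0 < p z)
    (ρ : ℝ) (hρ : -1 < ρ) (c : ℝ)
    (hd : HasDerivAt (fun σ : ℝ => entropy (tilted p σ)) c ρ) :
    HasDerivAt (fun σ : ℝ => klDiv (tilted p σ) p) (ρ * c) ρ := by
  have hρ₀ : 1 + ρ ≠ 0 := by linarith
  have hsplit : (fun σ => klDiv (tilted p σ) p)
      =ᶠ[nhds ρ] fun σ => σ * entropy (tilted p σ) - (1 + σ) * log (tiltNorm p σ) := by
    filter_upwards [eventually_gt_nhds hρ] with σ hσ
    exact klDiv_tilted hpos (by linarith)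
  have hderiv := ((hasDerivAt_id ρ).mul hd).sub
    (((hasDerivAt_id ρ).const_add 1).mul (hasDerivAt_log_tiltNorm hpos hρ₀))
  refine (hderiv.congr_of_eventuallyEq hsplit).congr_deriv ?_
  field_simp
  simp only [id]
  ring

/-- Lemma 18: `d/dρ D(p^ρ‖p) = ρ · d/dρ H(p^ρ)`. -/
theorem statement18 {Z : Type*} [Fintype Z] [Nonempty Z]
    (p : Z → ℝ) (hp : IsPMF p) (hpos : ∀ z, 0 < p z)
    (ρ : ℝ) (hρ : -1 < ρ) (c : ℝ)
    (hd : HasDerivAt (fun σ : ℝ => entropy (tilted p σ)) c ρ) :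
    HasDerivAt (fun σ : ℝ => klDiv (tilted p σ) p) (ρ * c) ρ :=
  statement18_general p hpos ρ hρ c hd
end
end

section
/- The function ρ ↦ D(p^ρ‖p) − H(p^ρ) is nonincreasing on the interval (−1, 1] and nondecreasing on the interval [1, ∞); equivalently, the sign of its derivative at ρ equals the sign of ρ − 1. -/
open scoped BigOperators

noncomputable section

/-!
Put `b = 1 / (1 + ρ)`, so that `p^ρ = p^b / Σ p^b`. Since `D(q‖p) − H(q) = Σ q log (q² / p)`,
for `q = p^ρ` this equals `(2b − 1) E_q[log p] − 2 log Σ p^b`, whose derivative in `b` is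
`(2b − 1) Var_q(log p)`. The variance is nonnegative, so as a function of `b` the quantity
decreases up to `b = 1/2` and increases after it; and `b` is a decreasing function of `ρ`
taking the value `1/2` at `ρ = 1`.
-/

open Real Finset

namespace TiltedPMF

variable {Z : Type*} [Fintype Z] {p : Z → ℝ}

def powSum (p : Z → ℝ) (b : ℝ) : ℝ := ∑ z, p z ^ b

def logPowSum (p : Z → ℝ) (b : ℝ) : ℝ := ∑ z, p z ^ b * log (p z)

def logSqPowSum (p : Z → ℝ) (b : ℝ) : ℝ := ∑ z, p z ^ b * log (p z) ^ 2

/-- `D(p^ρ‖p) − H(p^ρ)` as a function of the exponent `b = 1 / (1 + ρ)`. -/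
def klDivSubEntropyOfExponent (p : Z → ℝ) (b : ℝ) : ℝ :=
  (2 * b - 1) * (logPowSum p b / powSum p b) - 2 * log (powSum p b)

theorem powSum_pos [Nonempty Z] (hpos : ∀ z, 0 < p z) (b : ℝ) : 0 < powSum p b :=
  sum_pos (fun z _ => rpow_pos_of_pos (hpos z) b) univ_nonempty

theorem hasDerivAt_powSum (hpos : ∀ z, 0 < p z) (b : ℝ) :
    HasDerivAt (powSum p) (logPowSum p b) b :=
  HasDerivAt.fun_sum fun z _ => (hasStrictDerivAt_const_rpow (hpos z) b).hasDerivAt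

theorem hasDerivAt_logPowSum (hpos : ∀ z, 0 < p z) (b : ℝ) :
    HasDerivAt (logPowSum p) (logSqPowSum p b) b := by
  simp only [logSqPowSum, sq, ← mul_assoc]
  exact HasDerivAt.fun_sum fun z _ =>
    (hasStrictDerivAt_const_rpow (hpos z) b).hasDerivAt.mul_const (log (p z))

/-- Cauchy–Schwarz: the variance of `log p` under the weights `p^b` is nonnegative. -/
theorem logPowSum_sq_le [Nonempty Z] (hpos : ∀ z, 0 < p z) (b : ℝ) :
    logPowSum p b ^ 2 ≤ logSqPowSum p b * powSum p b := by
  have hweight : ∀ z ∈ univ, 0 < p z ^ b := fun z _ => rpow_pos_of_pos (hpos z) b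
  have h : logPowSum p b ^ 2 / powSum p b ≤ ∑ z, (p z ^ b * log (p z)) ^ 2 / p z ^ b :=
    sq_sum_div_le_sum_sq_div univ (fun z => p z ^ b * log (p z)) hweight
  rw [div_le_iff₀ (powSum_pos hpos b)] at h
  refine h.trans_eq (congrArg (· * powSum p b) (Finset.sum_congr rfl fun z hz => ?_))
  field_simp [(hweight z hz).ne']

theorem klDiv_tilted_sub_entropy_tilted [Nonempty Z] (hpos : ∀ z, 0 < p z) (ρ : ℝ) :
    klDiv (tilted p ρ) p - entropy (tilted p ρ) = klDivSubEntropyOfExponent p (1 / (1 + ρ)) := by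
  set b := 1 / (1 + ρ)
  have hS : 0 < powSum p b := powSum_pos hpos b
  have hweight : ∀ z, 0 < p z ^ b := fun z => rpow_pos_of_pos (hpos z) b
  have htilted : ∀ z, tilted p ρ z = p z ^ b / powSum p b := fun z => rfl
  have hlog : ∀ z, log (tilted p ρ z) = b * log (p z) - log (powSum p b) := fun z => by
    rw [htilted, log_div (hweight z).ne' hS.ne', log_rpow (hpos z)]
  have htilted_pos : ∀ z, 0 < tilted p ρ z := fun z => div_pos (hweight z) hS
  have hterm : ∀ z, tilted p ρ z * log (tilted p ρ z / p z) + tilted p ρ z * log (tilted p ρ z) =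
      (2 * b - 1) * (p z ^ b * log (p z) / powSum p b)
        - 2 * log (powSum p b) * (p z ^ b / powSum p b) := fun z => by
    rw [log_div (htilted_pos z).ne' (hpos z).ne', hlog, htilted]
    ring
  rw [klDiv, entropy, sub_neg_eq_add, ← sum_add_distrib]
  simp only [hterm]
  rw [sum_sub_distrib, ← mul_sum, ← mul_sum, ← sum_div, ← sum_div, ← logPowSum, ← powSum,
    div_self hS.ne', mul_one, klDivSubEntropyOfExponent]

theorem hasDerivAt_klDivSubEntropyOfExponent [Nonempty Z] (hpos : ∀ z, 0 < p z) (b : ℝ) :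
    HasDerivAt (klDivSubEntropyOfExponent p)
      ((2 * b - 1) * ((logSqPowSum p b * powSum p b - logPowSum p b ^ 2) / powSum p b ^ 2)) b := by
  have hS := hasDerivAt_powSum hpos b
  have hSne : powSum p b ≠ 0 := (powSum_pos hpos b).ne'
  have hlinear : HasDerivAt (fun x : ℝ => 2 * x - 1) 2 b := by
    simpa using ((hasDerivAt_id b).const_mul 2).sub_const 1
  refine ((hlinear.mul ((hasDerivAt_logPowSum hpos b).div hS hSne)).sub
    ((hS.log hSne).const_mul 2)).congr_deriv ?_
  simp only [Pi.div_apply]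
  ring

theorem monotoneOn_klDivSubEntropyOfExponent [Nonempty Z] (hpos : ∀ z, 0 < p z) :
    MonotoneOn (klDivSubEntropyOfExponent p) (Set.Ici (1 / 2)) := by
  have hderiv := hasDerivAt_klDivSubEntropyOfExponent hpos
  refine monotoneOn_of_hasDerivWithinAt_nonneg (convex_Ici _)
    (fun b _ => (hderiv b).continuousAt.continuousWithinAt)
    (fun b _ => (hderiv b).hasDerivWithinAt) fun b hb => ?_
  rw [interior_Ici, Set.mem_Ioi] at hb
  exact mul_nonneg (by linarith)
    (div_nonneg (sub_nonneg.2 (logPowSum_sq_le hpos b)) (sq_nonneg _))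

theorem antitoneOn_klDivSubEntropyOfExponent [Nonempty Z] (hpos : ∀ z, 0 < p z) :
    AntitoneOn (klDivSubEntropyOfExponent p) (Set.Iic (1 / 2)) := by
  have hderiv := hasDerivAt_klDivSubEntropyOfExponent hpos
  refine antitoneOn_of_hasDerivWithinAt_nonpos (convex_Iic _)
    (fun b _ => (hderiv b).continuousAt.continuousWithinAt)
    (fun b _ => (hderiv b).hasDerivWithinAt) fun b hb => ?_
  rw [interior_Iic, Set.mem_Iio] at hb
  exact mul_nonpos_of_nonpos_of_nonneg (by linarith)
    (div_nonneg (sub_nonneg.2 (logPowSum_sq_le hpos b)) (sq_nonneg _))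

theorem antitoneOn_one_div_one_add : AntitoneOn (fun ρ : ℝ => 1 / (1 + ρ)) (Set.Ioi (-1)) :=
  fun x hx _ _ hxy => one_div_le_one_div_of_le (by linarith [Set.mem_Ioi.1 hx]) (by linarith)

end TiltedPMF

theorem statement19_general {Z : Type*} [Fintype Z] [Nonempty Z]
    (p : Z → ℝ) (hpos : ∀ z, 0 < p z) :
    AntitoneOn (fun ρ : ℝ => klDiv (tilted p ρ) p - entropy (tilted p ρ))
        (Set.Ioc (-1 : ℝ) 1) ∧
      MonotoneOn (fun ρ : ℝ => klDiv (tilted p ρ) p - entropy (tilted p ρ))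
        (Set.Ici (1 : ℝ)) := by
  have hcomp : (fun ρ : ℝ => klDiv (tilted p ρ) p - entropy (tilted p ρ)) =
      TiltedPMF.klDivSubEntropyOfExponent p ∘ fun ρ => 1 / (1 + ρ) :=
    funext (TiltedPMF.klDiv_tilted_sub_entropy_tilted hpos)
  rw [hcomp]
  constructor
  · refine (TiltedPMF.monotoneOn_klDivSubEntropyOfExponent hpos).comp_AntitoneOn
      (TiltedPMF.antitoneOn_one_div_one_add.mono Set.Ioc_subset_Ioi_self) fun ρ hρ => ?_
    exact Set.mem_Ici.2 (one_div_le_one_div_of_le (by linarith [hρ.1]) (by linarith [hρ.2]))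
  · refine (TiltedPMF.antitoneOn_klDivSubEntropyOfExponent hpos).comp
      (TiltedPMF.antitoneOn_one_div_one_add.mono (Set.Ici_subset_Ioi.2 (by norm_num)))
      fun ρ hρ => ?_
    exact Set.mem_Iic.2 (one_div_le_one_div_of_le two_pos (by linarith [Set.mem_Ici.1 hρ]))

/-- Lemma 19: `ρ ↦ D(p^ρ‖p) − H(p^ρ)` is nonincreasing on `(−1,1]` and nondecreasing on
`[1,∞)`. -/
theorem statement19 {Z : Type*} [Fintype Z] [Nonempty Z]
    (p : Z → ℝ) (hp : IsPMF p) (hpos : ∀ z, 0 < p z) :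
    AntitoneOn (fun ρ : ℝ => klDiv (tilted p ρ) p - entropy (tilted p ρ))
        (Set.Ioc (-1 : ℝ) 1) ∧
      MonotoneOn (fun ρ : ℝ => klDiv (tilted p ρ) p - entropy (tilted p ρ))
        (Set.Ici (1 : ℝ)) :=
  statement19_general p hpos
end
end
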